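/- arXiv:0908.0630 — 7 statements merged into one kernel-verified Lean document; each statement's English description precedes it below -/
import Mathlib

section
/- Let R ⊆ S be a faithfully flat extension of commutative rings of characteristic p > 0. If S is coherent, and moreover for every element a ∈ R and finitely generated ideals I, J of R the extended annihilator (0 :_S aS) and (IS ∩ JS) satisfy the base-change formulas (0 :_R a)S = (0 :_S a) and (I ∩ J)S = IS ∩ JS (which hold by flatness), then R is coherent. -/
/-!
Finite presentation descends along faithfully flat maps: if `S ⊗[R] M` is finitely presented
over `S`, then `M` is finite over `R`, and for a presentation `Rⁿ → M` flatness identifies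
`S ⊗[R] ker` with the kernel of `Sⁿ → S ⊗[R] M`, which is finitely generated, so the kernel
itself is finitely generated. For a finitely generated ideal `I` of `R`, flatness embeds
`S ⊗[R] I` into `S ⊗[R] R = S` as a finitely generated ideal, which is finitely presented
because `S` is coherent; hence `I` is finitely presented.
-/

open TensorProduct

/-- A commutative ring is *coherent* if every finitely generated ideal is
finitely presented (as a module). -/
def IsCoherentRing (R : Type*) [CommRing R] : Prop :=
  ∀ I : Ideal R, I.FG → Module.FinitePresentation R I

lemma Module.FinitePresentation.of_finitePresentation_tensorProduct_of_faithfullyFlat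
    {R M : Type*} [CommRing R] [AddCommGroup M] [Module R M]
    (S : Type*) [CommRing S] [Algebra R S] [Module.FaithfullyFlat R S]
    [Module.FinitePresentation S (S ⊗[R] M)] :
    Module.FinitePresentation R M := by
  have : Module.Finite R M := .of_finite_tensorProduct_of_faithfullyFlat S
  obtain ⟨n, f, hf⟩ := Module.Finite.exists_fin' R M
  refine Module.finitePresentation_of_surjective f hf ?_
  have hker : (LinearMap.ker (AlgebraTensorModule.lTensor S S f)).FG :=
    Module.FinitePresentation.fg_ker _ (LinearMap.lTensor_surjective S hf)
  have : Module.Finite S (LinearMap.ker (AlgebraTensorModule.lTensor S S f)) :=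
    Module.Finite.iff_fg.mpr hker
  have : Module.Finite S (S ⊗[R] LinearMap.ker f) := .equiv (LinearMap.tensorKerEquiv S S f).symm
  exact Module.Finite.iff_fg.mp (.of_finite_tensorProduct_of_faithfullyFlat S)

lemma IsCoherentRing.finitePresentation_of_injective {S N : Type*} [CommRing S]
    [AddCommGroup N] [Module S N] [Module.Finite S N] (hS : IsCoherentRing S)
    (φ : N →ₗ[S] S) (hφ : Function.Injective φ) :
    Module.FinitePresentation S N :=
  have := hS _ (Module.Finite.iff_fg.mp (Module.Finite.range φ))
  .of_equiv (LinearEquiv.ofInjective φ hφ).symm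

theorem isCoherentRing_of_faithfullyFlat_general
    (R S : Type*) [CommRing R] [CommRing S] [Algebra R S]
    [Module.FaithfullyFlat R S]
    (hS : IsCoherentRing S) :
    IsCoherentRing R := by
  intro I hI
  have : Module.Finite R I := Module.Finite.iff_fg.mpr hI
  have : Module.FinitePresentation S (S ⊗[R] I) :=
    hS.finitePresentation_of_injective
      ((AlgebraTensorModule.rid R S S).toLinearMap ∘ₗ AlgebraTensorModule.lTensor S S I.subtype)
      (by simp [Module.Flat.lTensor_preserves_injective_linearMap _ I.injective_subtype])
  exact .of_finitePresentation_tensorProduct_of_faithfullyFlat S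

/-- Let `R ⊆ S` be a faithfully flat extension of commutative rings of
characteristic `p > 0`.  If `S` is coherent, and the base-change formulas
`(0 :_R a)S = (0 :_S a)` and `(I ∩ J)S = IS ∩ JS` hold for every `a ∈ R` and all finitely
generated ideals `I, J` of `R` (as they do by flatness), then `R` is coherent. -/
theorem isCoherentRing_of_faithfullyFlat
    (R S : Type*) [CommRing R] [CommRing S] [Algebra R S]
    (p : ℕ) [Fact p.Prime] [CharP R p] [CharP S p]
    (hext : Function.Injective (algebraMap R S))
    [Module.FaithfullyFlat R S]
    (hS : IsCoherentRing S)
    (hann : ∀ a : R,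
      ((⊥ : Ideal R).colon (Ideal.span {a})).map (algebraMap R S) =
        (⊥ : Ideal S).colon (Ideal.span {algebraMap R S a}))
    (hint : ∀ I J : Ideal R, I.FG → J.FG →
      (I ⊓ J).map (algebraMap R S) =
        I.map (algebraMap R S) ⊓ J.map (algebraMap R S)) :
    IsCoherentRing R :=
  isCoherentRing_of_faithfullyFlat_general R S hS
end

section
/- Let A be a perfect coherent domain of characteristic p > 0 such that every finitely generated proper ideal I of A satisfies ⋂_{n>0} I^n = 0. Then every finitely generated ideal of A is tightly closed: if c ≠ 0 and c z^q ∈ I^[q] for all sufficiently large q = p^e, then z ∈ I. -/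
/-- For `q` a power of the characteristic, `I^[q]` denotes the ideal generated by the
`q`-th powers of the elements of `I`. -/
def Ideal.frobPow {A : Type*} [CommRing A] (I : Ideal A) (q : ℕ) : Ideal A :=
  Ideal.span ((fun x => x ^ q) '' (I : Set A))

/-! Since Frobenius is an automorphism of a perfect ring, `c z^q ∈ I^[q]` says that `c^{1/q}`
lies in `(I : z)`, so `c ∈ (I : z)^q` for all large `q`. Coherence makes `(I : z)`
finitely generated, so if `z ∉ I` the Krull intersection hypothesis on `(I : z)` forces
`c = 0`. -/

namespace Ideal

variable {A : Type*} [CommRing A]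

/-- `(I : z)` is the projection to the first factor of the kernel of
`A × I → A, (a, x) ↦ a z + x`, whose image `(z) + I` is finitely presented. -/
theorem colon_span_singleton_fg_of_isCoherentRing (hcoh : IsCoherentRing A) {I : Ideal A}
    (hI : I.FG) (z : A) : (I.colon (span {z})).FG := by
  let φ : A × I →ₗ[A] A := (LinearMap.toSpanSingleton A A z).coprod I.subtype
  have hrange : LinearMap.range φ = span {z} ⊔ I := by
    rw [LinearMap.range_coprod, LinearMap.range_toSpanSingleton, Submodule.range_subtype]
  have : Module.FinitePresentation A (LinearMap.range φ) :=
    hcoh _ (hrange ▸ (Submodule.fg_span_singleton z).sup hI)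
  have : Module.Finite A I := Module.Finite.iff_fg.mpr hI
  have hker : (LinearMap.ker φ).FG := by
    rw [← LinearMap.ker_rangeRestrict]
    exact Module.FinitePresentation.fg_ker _ φ.surjective_rangeRestrict
  have hcolon : I.colon (span {z}) = (LinearMap.ker φ).map (LinearMap.fst A A I) := by
    ext a
    rw [mem_colon_span_singleton]
    constructor
    · intro haz
      exact ⟨(a, -⟨a * z, haz⟩), by simp [φ], rfl⟩
    · rintro ⟨⟨b, x⟩, hbx, rfl⟩
      have : b * z = -x := eq_neg_of_add_eq_zero_left (by simpa [φ] using hbx)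
      simp [this]
  exact hcolon ▸ hker.map _

theorem map_colon_span_singleton_of_equiv {S : Type*} [CommRing S] (σ : A ≃+* S) (I : Ideal A)
    (z : A) : (I.colon (span {z})).map σ = (I.map σ).colon (span {σ z}) := by
  ext c
  obtain ⟨b, rfl⟩ := σ.surjective c
  rw [apply_mem_of_equiv_iff, mem_colon_span_singleton, mem_colon_span_singleton, ← map_mul,
    apply_mem_of_equiv_iff]

theorem frobPow_le_pow (I : Ideal A) (q : ℕ) : I.frobPow q ≤ I ^ q :=
  span_le.mpr <| Set.image_subset_iff.mpr fun _ hx => pow_mem_pow hx q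

theorem mem_iInf_pow_succ_of_forall_mem_pow_pow {J : Ideal A} {p : ℕ} (hp : 1 < p) {c : A}
    {E : ℕ} (hc : ∀ e, E ≤ e → c ∈ J ^ p ^ e) : c ∈ ⨅ n : ℕ, J ^ (n + 1) := by
  refine Submodule.mem_iInf _ |>.mpr fun n => ?_
  have hn : n + 1 ≤ p ^ max E (n + 1) :=
    (le_max_right _ _).trans (Nat.lt_pow_self hp).le
  exact pow_le_pow_right hn (hc _ (le_max_left _ _))

variable (p : ℕ) [ExpChar A p] [PerfectRing A p]

theorem frobPow_eq_map_iterateFrobeniusEquiv (I : Ideal A) (e : ℕ) :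
    I.frobPow (p ^ e) = I.map (iterateFrobeniusEquiv A p e) := by
  have hfrob : ⇑(iterateFrobeniusEquiv A p e) = fun x => x ^ p ^ e := by
    funext x
    rw [iterateFrobeniusEquiv_apply, iterateFrobenius_def]
  rw [frobPow, map, hfrob]

theorem frobPow_colon_span_singleton (I : Ideal A) (z : A) (e : ℕ) :
    (I.frobPow (p ^ e)).colon (span {z ^ p ^ e}) = (I.colon (span {z})).frobPow (p ^ e) := by
  rw [frobPow_eq_map_iterateFrobeniusEquiv, frobPow_eq_map_iterateFrobeniusEquiv,
    map_colon_span_singleton_of_equiv, iterateFrobeniusEquiv_apply, iterateFrobenius_def]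

end Ideal

theorem mem_of_tightClosure_of_perfect_coherent_general
    (A : Type*) [CommRing A]
    (p : ℕ) [Fact p.Prime] [CharP A p] [PerfectRing A p]
    (hcoh : IsCoherentRing A)
    (hkrull : ∀ I : Ideal A, I.FG → I ≠ ⊤ → (⨅ n : ℕ, I ^ (n + 1)) = ⊥)
    (I : Ideal A) (hI : I.FG) (z c : A) (hc : c ≠ 0) (E : ℕ)
    (h : ∀ e : ℕ, E ≤ e → c * z ^ p ^ e ∈ I.frobPow (p ^ e)) :
    z ∈ I := by
  by_contra hz
  set J := I.colon (Ideal.span {z})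
  have hJ_ne_top : J ≠ ⊤ := by
    rwa [Ne, Submodule.colon_eq_top_iff_subset, SetLike.coe_subset_coe,
      Ideal.span_singleton_le_iff_mem]
  have hcJ : ∀ e, E ≤ e → c ∈ J ^ p ^ e := fun e he =>
    Ideal.frobPow_le_pow J _ <| Ideal.frobPow_colon_span_singleton p I z e ▸
      Ideal.mem_colon_span_singleton.mpr (h e he)
  have hc_mem := Ideal.mem_iInf_pow_succ_of_forall_mem_pow_pow (Fact.out : p.Prime).one_lt hcJ
  rw [hkrull J (Ideal.colon_span_singleton_fg_of_isCoherentRing hcoh hI z) hJ_ne_top] at hc_mem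
  exact hc ((Submodule.mem_bot A).mp hc_mem)

/-- Let `A` be a perfect coherent domain of characteristic `p > 0` such that
every finitely generated proper ideal `I` of `A` satisfies `⋂_{n>0} Iⁿ = 0`.  Then every
finitely generated ideal of `A` is tightly closed: if `c ≠ 0` and `c·z^q ∈ I^[q]` for all
sufficiently large `q = p^e`, then `z ∈ I`. -/
theorem mem_of_tightClosure_of_perfect_coherent
    (A : Type*) [CommRing A] [IsDomain A]
    (p : ℕ) [Fact p.Prime] [CharP A p] [PerfectRing A p]
    (hcoh : IsCoherentRing A)
    (hkrull : ∀ I : Ideal A, I.FG → I ≠ ⊤ → (⨅ n : ℕ, I ^ (n + 1)) = ⊥)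
    (I : Ideal A) (hI : I.FG) (z c : A) (hc : c ≠ 0) (E : ℕ)
    (h : ∀ e : ℕ, E ≤ e → c * z ^ p ^ e ∈ I.frobPow (p ^ e)) :
    z ∈ I :=
  mem_of_tightClosure_of_perfect_coherent_general A p hcoh hkrull I hI z c hc E h
end

section
/- The filtered colimit of a direct system of coherent commutative rings with flat transition maps is a coherent ring. -/
/-!
Each structure map `G i → lim G` is flat: by the equational criterion, a relation `∑ aₘ xₘ = 0`
in the colimit already holds at some stage `G k`, where it is trivial because `G i → G k` is flat,
and trivial relations push forward. A finitely generated ideal of the colimit is extended from a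
finitely generated ideal `J` of some `G j`; by flatness it is the base change of `J`, and base
change preserves finite presentation.
-/

open TensorProduct

section Flat

variable {A B : Type*} [CommRing A] [CommRing B]

theorem Module.IsTrivialRelation.map {M N : Type*} [AddCommGroup M] [Module A M]
    [AddCommGroup N] [Module A N] {ι : Type*} [Fintype ι] {f : ι → A} {x : ι → M}
    (h : IsTrivialRelation f x) (g : M →ₗ[A] N) : IsTrivialRelation f (g ∘ x) := by
  obtain ⟨k, a, y, hxy, hay⟩ := h
  exact ⟨k, a, g ∘ y, fun i => by simp [hxy], hay⟩

theorem Ideal.map_rid_baseChange [Algebra A B] (I : Ideal A) :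
    (I.baseChange B).map (AlgebraTensorModule.rid A B B).toLinearMap = I.map (algebraMap A B) := by
  rw [Submodule.baseChange_eq_span, Submodule.map_span, Ideal.map]
  congr 1
  ext x
  simp [Algebra.algebraMap_eq_smul_one]

noncomputable def Ideal.tensorEquivMapOfFlat [Algebra A B] [Module.Flat A B] (I : Ideal A) :
    B ⊗[A] I ≃ₗ[B] I.map (algebraMap A B) :=
  Submodule.toBaseChange.toLinearEquiv B I ≪≫ₗ
    (AlgebraTensorModule.rid A B B).submoduleMap _ ≪≫ₗ
    LinearEquiv.ofEq _ _ (Ideal.map_rid_baseChange I)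

theorem Ideal.finitePresentation_map_of_flat {φ : A →+* B} (hφ : φ.Flat) (I : Ideal A)
    [Module.FinitePresentation A I] : Module.FinitePresentation B (I.map φ) := by
  algebraize [φ]
  exact .of_equiv (Ideal.tensorEquivMapOfFlat I)

end Flat

namespace Ring.DirectLimit

variable {ι : Type*} [Preorder ι] [IsDirected ι (· ≤ ·)]
    {G : ι → Type*} [∀ i, CommRing (G i)] {f : ∀ i j, i ≤ j → G i →+* G j}

theorem exists_of_finite {κ : Type*} [Finite κ] (i : ι) (x : κ → DirectLimit G (f · · ·)) :
    ∃ j, i ≤ j ∧ ∃ y : κ → G j, ∀ k, of G (f · · ·) j (y k) = x k := by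
  have : Nonempty ι := ⟨i⟩
  choose i' y hy using fun k => exists_of (x k)
  obtain ⟨j₀, hj₀⟩ := (Set.finite_range i').bddAbove
  obtain ⟨j, hij, hj₀j⟩ := exists_ge_ge i j₀
  exact ⟨j, hij, fun k => f (i' k) j ((hj₀ ⟨k, rfl⟩).trans hj₀j) (y k),
    fun k => by rw [of_f, hy]⟩

theorem exists_fg_map_eq [Nonempty ι] (I : Ideal (DirectLimit G (f · · ·))) (hI : I.FG) :
    ∃ j, ∃ J : Ideal (G j), J.FG ∧ J.map (of G (f · · ·) j) = I := by
  obtain ⟨s, rfl⟩ := hI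
  obtain ⟨j, -, y, hy⟩ :=
    exists_of_finite (Classical.arbitrary ι) (Subtype.val : s → DirectLimit G (f · · ·))
  refine ⟨j, Ideal.span (Set.range y), ⟨Set.finite_range y |>.toFinset, by simp⟩, ?_⟩
  rw [Ideal.map_span, ← Set.range_comp, Function.comp_def]
  simp [hy]

variable [DirectedSystem G fun i j h => f i j h]

theorem flat_of (hflat : ∀ i j (h : i ≤ j), (f i j h).Flat) (i : ι) :
    (of G (f · · ·) i).Flat := by
  algebraize [of G (f · · ·) i]
  refine Module.Flat.of_forall_isTrivialRelation fun {l a x} hax => ?_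
  obtain ⟨j, hij, y, hy⟩ := exists_of_finite i x
  have hj : of G (f · · ·) j (∑ q, f i j hij (a q) * y q) = 0 := by
    simpa [Algebra.smul_def, RingHom.algebraMap_toAlgebra, ← hy] using hax
  obtain ⟨k, hjk, hk⟩ := of.zero_exact hj
  algebraize [f i k (hij.trans hjk)]
  have hrel : ∑ q, a q • f j k hjk (y q) = 0 := by
    simpa [Algebra.smul_def, RingHom.algebraMap_toAlgebra,
      ← DirectedSystem.map_map (f := fun i j h => f i j h) hij hjk] using hk
  have : Module.Flat (G i) (G k) := hflat i k _
  let g : G k →ₗ[G i] DirectLimit G (f · · ·) :=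
    { toFun := of G (f · · ·) k
      map_add' := map_add _
      map_smul' := fun c z => by simp [Algebra.smul_def, RingHom.algebraMap_toAlgebra] }
  have hx : x = g ∘ fun q => f j k hjk (y q) := by
    ext q
    simp [g, hy]
  exact hx ▸ (Module.Flat.isTrivialRelation_of_sum_smul_eq_zero hrel).map g

end Ring.DirectLimit

theorem isCoherentRing_directLimit_general
    {ι : Type*} [Preorder ι] [IsDirected ι (· ≤ ·)] [Nonempty ι]
    (G : ι → Type*) [∀ i, CommRing (G i)]
    (f : ∀ i j, i ≤ j → G i →+* G j)
    [DirectedSystem G fun i j h => f i j h]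
    (hcoh : ∀ i, IsCoherentRing (G i))
    (hflat : ∀ i j (h : i ≤ j), (f i j h).Flat) :
    IsCoherentRing (Ring.DirectLimit G fun i j h => f i j h) := by
  intro I hI
  obtain ⟨j, J, hJ, rfl⟩ := Ring.DirectLimit.exists_fg_map_eq I hI
  have := hcoh j J hJ
  exact Ideal.finitePresentation_map_of_flat (Ring.DirectLimit.flat_of hflat j) J

/-- The filtered colimit of a direct system of coherent commutative rings
with flat transition maps is a coherent ring. -/
theorem isCoherentRing_directLimit
    {ι : Type*} [Preorder ι] [IsDirected ι (· ≤ ·)] [Nonempty ι] [DecidableEq ι]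
    (G : ι → Type*) [∀ i, CommRing (G i)]
    (f : ∀ i j, i ≤ j → G i →+* G j)
    [DirectedSystem G fun i j h => f i j h]
    (hcoh : ∀ i, IsCoherentRing (G i))
    (hflat : ∀ i j (h : i ≤ j), (f i j h).Flat) :
    IsCoherentRing (Ring.DirectLimit G fun i j h => f i j h) :=
  isCoherentRing_directLimit_general G f hcoh hflat
end

section
/- Let R → S be a purely inseparable extension of Noetherian rings of characteristic p > 0 (i.e., for every s ∈ S there is q = p^e with s^q ∈ R, and the map is injective on reduced quotients). Then R^∞ ≅ S^∞; consequently R is F-coherent if and only if S is F-coherent. -/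
/-- Finite generation of submodules is preserved by (surjective-base) semilinear maps. -/
lemma Submodule.FG.map_semilinear {A B M N : Type*} [Semiring A] [Semiring B]
    [AddCommMonoid M] [Module A M] [AddCommMonoid N] [Module B N]
    {σ : A →+* B} [RingHomSurjective σ] (Φ : M →ₛₗ[σ] N) {S : Submodule A M}
    (h : S.FG) : (S.map Φ).FG := by
  classical
  obtain ⟨t, ht⟩ := h
  exact ⟨t.image Φ, by rw [Finset.coe_image, ← Submodule.map_span, ht]⟩

/-- Coherence transfers along a ring isomorphism. -/
lemma isCoherentRing_of_ringEquiv {A B : Type*} [CommRing A] [CommRing B]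
    (e : A ≃+* B) (h : IsCoherentRing A) : IsCoherentRing B := by
  classical
  intro J hJ
  haveI : RingHomSurjective (e : A →+* B) := ⟨e.surjective⟩
  set I : Ideal A := J.comap (e : A →+* B) with hIdef
  have hIfg : I.FG := by
    have := hJ.map e.symm.toRingHom
    rwa [show J.map e.symm.toRingHom = I from Ideal.map_symm e] at this
  have hFP : Module.FinitePresentation A I := h I hIfg
  obtain ⟨n, π, hπ⟩ := Module.Finite.exists_fin' A I
  have hker : (LinearMap.ker π).FG := Module.FinitePresentation.fg_ker π hπ
  let Φ : (Fin n → A) →ₛₗ[(e : A →+* B)] (Fin n → B) :=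
    { toFun := fun w i => e (w i)
      map_add' := fun v w => funext fun i => map_add e _ _
      map_smul' := fun a w => funext fun i => map_mul e _ _ }
  have hmem : ∀ w : Fin n → B, (e ((π fun i => e.symm (w i) : I) : A)) ∈ J := fun w =>
    Ideal.mem_comap.mp (π fun i => e.symm (w i)).2
  let π' : (Fin n → B) →ₗ[B] J :=
    { toFun := fun v => ⟨e ((π fun i => e.symm (v i) : I) : A), hmem v⟩
      map_add' := by
        intro v w
        apply Subtype.ext
        have h1 : (fun i => e.symm ((v + w) i)) =
            (fun i => e.symm (v i)) + (fun i => e.symm (w i)) :=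
          funext fun i => map_add e.symm _ _
        show e ((π fun i => e.symm ((v + w) i) : I) : A) =
          e ((π fun i => e.symm (v i) : I) : A) + e ((π fun i => e.symm (w i) : I) : A)
        rw [h1, map_add, Submodule.coe_add, map_add]
      map_smul' := by
        intro b v
        apply Subtype.ext
        have h1 : (fun i => e.symm ((b • v) i)) =
            e.symm b • fun i => e.symm (v i) := by
          funext i
          show e.symm (b * v i) = e.symm b * e.symm (v i)
          exact map_mul e.symm _ _
        show e ((π fun i => e.symm ((b • v) i) : I) : A) = _
        rw [h1, map_smul]
        show e (e.symm b * ((π fun i => e.symm (v i) : I) : A)) = _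
        rw [map_mul, e.apply_symm_apply]
        rfl }
  have hπ'surj : Function.Surjective π' := by
    rintro ⟨j, hj⟩
    have hj' : e.symm j ∈ I := Ideal.mem_comap.mpr (by simpa using hj)
    obtain ⟨w, hw⟩ := hπ ⟨e.symm j, hj'⟩
    refine ⟨fun i => e (w i), Subtype.ext ?_⟩
    show e ((π fun i => e.symm (e (w i)) : I) : A) = j
    have h2 : (fun i => e.symm (e (w i))) = w := funext fun i => e.symm_apply_apply _
    rw [h2, hw]
    exact e.apply_symm_apply j
  have hkerπ' : LinearMap.ker π' = (LinearMap.ker π).map Φ := by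
    ext v
    simp only [LinearMap.mem_ker, Submodule.mem_map]
    constructor
    · intro hv
      refine ⟨fun i => e.symm (v i), ?_, funext fun i => e.apply_symm_apply _⟩
      have h1 := Subtype.ext_iff.mp hv
      rw [ZeroMemClass.coe_zero] at h1
      have h2 : ((π fun i => e.symm (v i) : I) : A) = 0 :=
        e.injective (by rw [map_zero]; exact h1)
      exact Subtype.ext h2
    · rintro ⟨w, hw, rfl⟩
      apply Subtype.ext
      show e ((π fun i => e.symm (e (w i)) : I) : A) = 0
      have h2 : (fun i => e.symm (e (w i))) = w := funext fun i => e.symm_apply_apply _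
      rw [h2, hw]
      simp
  have hkerfg : (LinearMap.ker π').FG := by
    rw [hkerπ']
    exact hker.map_semilinear Φ
  exact Module.finitePresentation_of_surjective π' hπ'surj hkerfg

/-- Let `R → S` be a purely inseparable extension of Noetherian rings of
characteristic `p > 0` (an injective ring map such that every `s ∈ S` has some `p`-power in
`R`).  Then `R^∞ ≅ S^∞`; consequently `R` is `F`-coherent iff `S` is `F`-coherent. -/
theorem perfectClosure_iso_of_purelyInseparable
    (R S : Type*) [CommRing R] [CommRing S]
    [IsNoetherianRing R] [IsNoetherianRing S]
    (p : ℕ) [Fact p.Prime] [CharP R p] [CharP S p]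
    (f : R →+* S) (hinj : Function.Injective f)
    (hpi : ∀ s : S, ∃ e : ℕ, s ^ p ^ e ∈ Set.range f) :
    Nonempty (PerfectClosure R p ≃+* PerfectClosure S p) ∧
      (IsCoherentRing (PerfectClosure R p) ↔ IsCoherentRing (PerfectClosure S p)) := by
  classical
  have hresp : ∀ x y : ℕ × R, PerfectClosure.R R p x y →
      PerfectClosure.mk S p (x.1, f x.2) = PerfectClosure.mk S p (y.1, f y.2) := by
    rintro _ _ ⟨n, x⟩
    show PerfectClosure.mk S p (n, f x) = PerfectClosure.mk S p (n + 1, f (frobenius R p x))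
    rw [f.map_frobenius]
    exact Quot.sound (PerfectClosure.R.intro n (f x))
  let g : PerfectClosure R p →+* PerfectClosure S p :=
    { toFun := fun x => PerfectClosure.liftOn x
        (fun x => PerfectClosure.mk S p (x.1, f x.2)) hresp
      map_one' := by
        show PerfectClosure.mk S p (0, f 1) = 1
        rw [map_one, PerfectClosure.one_def]
      map_zero' := by
        show PerfectClosure.mk S p (0, f 0) = 0
        rw [map_zero, PerfectClosure.zero_def]
      map_mul' := fun a b => by
        refine PerfectClosure.induction_on a fun x => PerfectClosure.induction_on b fun y => ?_
        rw [PerfectClosure.mk_mul_mk]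
        show PerfectClosure.mk S p (x.1 + y.1,
            f ((frobenius R p)^[y.1] x.2 * (frobenius R p)^[x.1] y.2)) =
          PerfectClosure.mk S p (x.1, f x.2) * PerfectClosure.mk S p (y.1, f y.2)
        rw [map_mul, f.map_iterate_frobenius, f.map_iterate_frobenius,
          PerfectClosure.mk_mul_mk]
      map_add' := fun a b => by
        refine PerfectClosure.induction_on a fun x => PerfectClosure.induction_on b fun y => ?_
        rw [PerfectClosure.mk_add_mk]
        show PerfectClosure.mk S p (x.1 + y.1,
            f ((frobenius R p)^[y.1] x.2 + (frobenius R p)^[x.1] y.2)) =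
          PerfectClosure.mk S p (x.1, f x.2) + PerfectClosure.mk S p (y.1, f y.2)
        rw [map_add, f.map_iterate_frobenius, f.map_iterate_frobenius,
          PerfectClosure.mk_add_mk] }
  have hg_mk : ∀ x : ℕ × R, g (PerfectClosure.mk R p x) = PerfectClosure.mk S p (x.1, f x.2) :=
    fun x => rfl
  have ginj : Function.Injective g := by
    intro a b hab
    obtain ⟨x, rfl⟩ := PerfectClosure.mk_surjective R p a
    obtain ⟨y, rfl⟩ := PerfectClosure.mk_surjective R p b
    rw [hg_mk, hg_mk, PerfectClosure.mk_eq_iff] at hab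
    obtain ⟨z, hz⟩ := hab
    rw [PerfectClosure.mk_eq_iff]
    refine ⟨z, hinj ?_⟩
    rw [f.map_iterate_frobenius, f.map_iterate_frobenius]
    exact hz
  have gsurj : Function.Surjective g := by
    intro b
    obtain ⟨⟨n, s⟩, rfl⟩ := PerfectClosure.mk_surjective S p b
    obtain ⟨e, r, hr⟩ := hpi s
    refine ⟨PerfectClosure.mk R p (n + e, r), ?_⟩
    rw [hg_mk]
    show PerfectClosure.mk S p (n + e, f r) = PerfectClosure.mk S p (n, s)
    rw [hr, add_comm n e]
    exact (PerfectClosure.R.sound S p e n s _ (by rw [iterate_frobenius])).symm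
  let E : PerfectClosure R p ≃+* PerfectClosure S p := RingEquiv.ofBijective g ⟨ginj, gsurj⟩
  exact ⟨⟨E⟩, ⟨isCoherentRing_of_ringEquiv E, isCoherentRing_of_ringEquiv E.symm⟩⟩
end

section
/- Let k be a field of characteristic 2. Then the subring R = k[x^4, x^3 y, x y^3, y^4] of the polynomial ring k[x,y] satisfies k[x^4, y^4] ⊆ R ⊆ k[x,y], and both inclusions are purely inseparable extensions; hence R has the same perfect closure as k[x,y] and is F-coherent. -/
instance subalgebraCharP {k A : Type*} [CommSemiring k] [CommSemiring A] [Algebra k A]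
    (p : ℕ) [CharP A p] (S : Subalgebra k A) : CharP S p :=
  CharP.subsemiring A p S.toSubsemiring

open MvPolynomial

/-!
Fourth powers of `k[x,y]` lie in `R` and fourth powers of `R` lie in `k[x⁴,y⁴]`, so
`R ⊆ k[x,y]` is purely inseparable and both rings have the same perfect closure `P`.

`P` is coherent because `T = k[x,y]` is Noetherian and free over its subring of `p ^ l`-th
powers (on the basis `w x^a y^b`, with `a, b < p ^ l` and `w` running over a basis of `k` over
`k ^ p ^ l`).
Raising to a suitable `p ^ e`-th power, which is an automorphism of `P`, moves a finite family
of `P` into `T`; its syzygies over `T` are finitely generated, and by flatness of the Frobenius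
of `T` the same generators generate the syzygies over `P`.
-/

universe u

open Matrix

section Syzygies

variable {R S : Type*} [CommRing R] [CommRing S] {m r : Type*} [Fintype m] [Fintype r]

def IsSyzygyMatrix (g : m → R) (V : Matrix r m R) : Prop :=
  V *ᵥ g = 0 ∧ ∀ c : m → R, c ⬝ᵥ g = 0 → ∃ d, d ᵥ* V = c

theorem IsSyzygyMatrix.ker_eq {g : m → R} {V : Matrix r m R} (h : IsSyzygyMatrix g V) :
    LinearMap.ker (Fintype.linearCombination R g) = LinearMap.range V.vecMulLinear := by
  ext c
  refine ⟨fun hc => h.2 c hc, ?_⟩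
  rintro ⟨d, rfl⟩
  change (d ᵥ* V) ⬝ᵥ g = 0
  rw [← dotProduct_mulVec, h.1, dotProduct_zero]

theorem isCoherentRing_of_forall_exists_isSyzygyMatrix
    (h : ∀ (n : ℕ) (g : Fin n → R),
      ∃ (k : ℕ) (V : Matrix (Fin k) (Fin n) R), IsSyzygyMatrix g V) :
    IsCoherentRing R := by
  intro I hI
  obtain ⟨n, g, rfl⟩ := Submodule.fg_iff_exists_fin_generating_family.mp hI
  obtain ⟨k, V, hV⟩ := h n g
  have hmem (c : Fin n → R) :
      Fintype.linearCombination R g c ∈ Submodule.span R (Set.range g) :=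
    Fintype.range_linearCombination R g ▸ LinearMap.mem_range_self _ c
  refine Module.finitePresentation_of_free_of_surjective
    ((Fintype.linearCombination R g).codRestrict _ hmem) ?_ ?_
  · rintro ⟨x, hx⟩
    obtain ⟨c, rfl⟩ := (Fintype.range_linearCombination R g ▸ hx : x ∈ LinearMap.range _)
    exact ⟨c, rfl⟩
  · rw [LinearMap.ker_codRestrict, hV.ker_eq]
    exact Module.Finite.iff_fg.mp (Module.Finite.range _)

theorem exists_isSyzygyMatrix [IsNoetherianRing R] (g : m → R) :
    ∃ (k : ℕ) (V : Matrix (Fin k) m R), IsSyzygyMatrix g V := by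
  obtain ⟨k, v, hv⟩ := Submodule.fg_iff_exists_fin_generating_family.mp
    (IsNoetherian.noetherian (LinearMap.ker (Fintype.linearCombination R g)))
  refine ⟨k, Matrix.of v, funext fun s => ?_, fun c hc => ?_⟩
  · have hs : v s ∈ LinearMap.ker (Fintype.linearCombination R g) :=
      hv ▸ Submodule.subset_span ⟨s, rfl⟩
    exact hs
  · have hc : c ∈ LinearMap.ker (Fintype.linearCombination R g) := hc
    rw [← hv, Submodule.mem_span_range_iff_exists_fun] at hc
    obtain ⟨d, hd⟩ := hc
    exact ⟨d, (vecMul_eq_sum d _).trans hd⟩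

theorem IsSyzygyMatrix.map_ringEquiv {g : m → R} {V : Matrix r m R} (h : IsSyzygyMatrix g V)
    (σ : R ≃+* S) : IsSyzygyMatrix (σ ∘ g) (V.map σ) := by
  refine ⟨funext fun s => ?_, fun c hc => ?_⟩
  · simpa [h.1] using ((σ : R →+* S).map_mulVec V g s).symm
  · obtain ⟨d, hd⟩ := h.2 (σ.symm ∘ c) <| by
      have := (σ.symm : S →+* R).map_dotProduct c (σ ∘ g)
      simp only [hc, map_zero] at this
      simpa [Function.comp_def] using this.symm
    refine ⟨σ ∘ d, funext fun i => ?_⟩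
    simpa [hd] using ((σ : R →+* S).map_vecMul V d i).symm

end Syzygies

section FrobeniusBasis

variable {T : Type u} [CommRing T] (p : ℕ) [ExpChar T p] (l : ℕ)

noncomputable def frobeniusCombination {J : Type*} (w : J → T) : (J →₀ T) →+ T :=
  Finsupp.liftAddHom fun j =>
    (AddMonoidHom.mulRight (w j)).comp (iterateFrobenius T p l).toAddMonoidHom

variable {p l}

@[simp]
theorem frobeniusCombination_single {J : Type*} (w : J → T) (j : J) (t : T) :
    frobeniusCombination p l w (Finsupp.single j t) = t ^ p ^ l * w j := by
  rw [frobeniusCombination, Finsupp.liftAddHom_apply_single]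
  simp [iterateFrobenius_def]

theorem frobeniusCombination_smul {J : Type*} (w : J → T) (t : T) (a : J →₀ T) :
    frobeniusCombination p l w (t • a) = t ^ p ^ l * frobeniusCombination p l w a := by
  induction a using Finsupp.induction_linear with
  | zero => simp
  | add a b ha hb => rw [smul_add, map_add, map_add, ha, hb, mul_add]
  | single j s => rw [Finsupp.smul_single, frobeniusCombination_single,
      frobeniusCombination_single, smul_eq_mul, mul_pow, mul_assoc]

variable (T p l)

/-- `T` is free, as a module over itself through the `p ^ l`-power Frobenius, with basis `w`. -/
def HasFrobeniusBasis : Prop :=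
  ∃ (J : Type u) (w : J → T), Function.Bijective (frobeniusCombination p l w)

variable {T p l}

theorem IsSyzygyMatrix.frobenius (hT : HasFrobeniusBasis T p l) {m r : Type*} [Fintype m]
    [Fintype r] {g : m → T} {V : Matrix r m T} (h : IsSyzygyMatrix g V) :
    IsSyzygyMatrix (iterateFrobenius T p l ∘ g) (V.map (iterateFrobenius T p l)) := by
  classical
  obtain ⟨J, w, hinj, hsurj⟩ := hT
  refine ⟨funext fun s => ?_, fun c hc => ?_⟩
  · simpa [h.1] using ((iterateFrobenius T p l).map_mulVec V g s).symm
  choose A hA using fun i => hsurj (c i)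
  have hsyz (j : J) : (fun i => A i j) ⬝ᵥ g = 0 := by
    have hF : frobeniusCombination p l w (∑ i, g i • A i) = frobeniusCombination p l w 0 := by
      rw [map_sum, map_zero, ← hc]
      simp [frobeniusCombination_smul, hA, dotProduct, iterateFrobenius_def, mul_comm]
    simpa [dotProduct, mul_comm] using congr($(hinj hF) j)
  choose D hD using fun j => h.2 _ (hsyz j)
  -- `D j` is replaced by `0` outside the supports of the `A i`, to get finitely supported columns
  set S := Finset.univ.biUnion fun i => (A i).support
  let E (s : r) : J →₀ T := Finsupp.onFinset S (fun j => if j ∈ S then D j s else 0)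
    (fun j hj => by by_contra hjS; simp [hjS] at hj)
  have hE (i : m) : ∑ s, V s i • E s = A i := by
    ext j
    by_cases hj : j ∈ S
    · simpa [E, hj, vecMul, dotProduct, mul_comm] using congr_fun (hD j) i
    · have hAj : A i j = 0 :=
        Finsupp.notMem_support_iff.1 fun h =>
          hj (Finset.mem_biUnion.2 ⟨i, Finset.mem_univ _, h⟩)
      simp [E, hj, hAj]
  refine ⟨fun s => frobeniusCombination p l w (E s), funext fun i => ?_⟩
  rw [← hA i, ← hE i, map_sum]
  simp [vecMul, dotProduct, frobeniusCombination_smul, iterateFrobenius_def, mul_comm]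

end FrobeniusBasis

section Coherence

variable {T P : Type*} [CommRing T] [CommRing P]

theorem IsPRadical.injective (ι : T →+* P) (p : ℕ) [IsPRadical ι p] [IsReduced T] :
    Function.Injective ι :=
  (injective_iff_map_eq_zero ι).2 fun _ hx =>
    (pNilradical_le_nilradical.trans (nilradical_eq_zero T).le) (IsPRadical.ker_le ι p hx)

theorem IsPRadical.exists_pow_eq (ι : T →+* P) (p : ℕ) [IsPRadical ι p] {n : Type*}
    [Fintype n] (G : n → P) : ∃ (e : ℕ) (b : n → T), ∀ i, ι (b i) = G i ^ p ^ e := by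
  choose e b hb using fun i => IsPRadical.pow_mem ι p (G i)
  refine ⟨∑ i, e i, fun i => b i ^ p ^ (∑ j, e j - e i), fun i => ?_⟩
  rw [map_pow, hb, ← pow_mul, ← pow_add,
    Nat.add_sub_cancel' (Finset.single_le_sum (fun j _ => Nat.zero_le (e j)) (Finset.mem_univ i))]

variable {p : ℕ} [ExpChar T p] [ExpChar P p] [PerfectRing P p] [IsReduced T]

theorem IsSyzygyMatrix.map_of_isPRadical (ι : T →+* P) [IsPRadical ι p]
    (hT : ∀ l, HasFrobeniusBasis T p l) {m r : Type*} [Fintype m] [Fintype r] {b : m → T}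
    {V : Matrix r m T} (h : IsSyzygyMatrix b V) : IsSyzygyMatrix (ι ∘ b) (V.map ι) := by
  refine ⟨funext fun s => ?_, fun c hc => ?_⟩
  · simpa [h.1] using (ι.map_mulVec V b s).symm
  obtain ⟨l, c', hc'⟩ := IsPRadical.exists_pow_eq ι p c
  have hsyz : c' ⬝ᵥ iterateFrobenius T p l ∘ b = 0 := by
    apply IsPRadical.injective ι p
    calc ι (c' ⬝ᵥ iterateFrobenius T p l ∘ b)
        = iterateFrobenius P p l (c ⬝ᵥ ι ∘ b) := by
          simp only [dotProduct, Function.comp_apply, map_sum, map_mul, map_pow, hc',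
            iterateFrobenius_def]
      _ = ι 0 := by rw [hc, map_zero, map_zero]
  obtain ⟨d, hd⟩ := (h.frobenius (hT l)).2 c' hsyz
  refine ⟨(iterateFrobeniusEquiv P p l).symm ∘ ι ∘ d, funext fun i => ?_⟩
  apply (iterateFrobeniusEquiv P p l).injective
  calc iterateFrobeniusEquiv P p l
        (((iterateFrobeniusEquiv P p l).symm ∘ ι ∘ d ᵥ* V.map ι) i)
      = (ι ∘ d ᵥ* (V.map (iterateFrobenius T p l)).map ι) i := by
        simp only [vecMul, dotProduct, map_sum, map_mul, Function.comp_apply, map_apply,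
          RingEquiv.apply_symm_apply, coe_iterateFrobeniusEquiv, ι.map_iterateFrobenius]
    _ = ι (c' i) := by rw [← ι.map_vecMul, hd]
    _ = iterateFrobeniusEquiv P p l (c i) := hc' i

theorem isCoherentRing_of_isPRadical (ι : T →+* P) [IsPRadical ι p] [IsNoetherianRing T]
    (hT : ∀ l, HasFrobeniusBasis T p l) : IsCoherentRing P := by
  refine isCoherentRing_of_forall_exists_isSyzygyMatrix fun n G => ?_
  obtain ⟨e, b, hb⟩ := IsPRadical.exists_pow_eq ι p G
  obtain ⟨k, V, hV⟩ := exists_isSyzygyMatrix b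
  have hG : G = (iterateFrobeniusEquiv P p e).symm ∘ ι ∘ b := by
    funext i
    rw [Function.comp_apply, Function.comp_apply, hb]
    exact ((iterateFrobeniusEquiv P p e).symm_apply_apply (G i)).symm
  exact ⟨k, _, hG ▸ (hV.map_of_isPRadical ι hT).map_ringEquiv _⟩

end Coherence

section Polynomial

variable {p l : ℕ}

theorem hasFrobeniusBasis_of_field (k : Type u) [Field k] [ExpChar k p] :
    HasFrobeniusBasis k p l := by
  let kq := (iterateFrobenius k p l).fieldRange
  let B := Module.Basis.ofVectorSpace kq k
  let e := (Finsupp.mapRange.addEquiv (iterateFrobenius k p l).rangeRestrictFieldEquiv.toAddEquiv :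
    (_ →₀ k) ≃+ (Module.Basis.ofVectorSpaceIndex kq k →₀ kq))
  refine ⟨_, fun j => B j, ?_⟩
  have hF : frobeniusCombination p l (fun j => B j) = B.repr.symm.toAddMonoidHom.comp e := by
    refine Finsupp.addHom_ext fun j t => ?_
    simp [e, Subfield.smul_def, iterateFrobenius_def]
  rw [hF]
  exact B.repr.symm.bijective.comp e.bijective

theorem Nat.eq_of_dvd_mul_add_sub {q a b c : ℕ} (hb : b < q) (hc : c < q) (hle : c ≤ q * a + b)
    (h : q ∣ q * a + b - c) : c = b := by
  obtain ⟨e, he⟩ := h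
  have key : (q * e + c) % q = (q * a + b) % q := by rw [← he, Nat.sub_add_cancel hle]
  simpa [Nat.mul_add_mod, Nat.mod_eq_of_lt hb, Nat.mod_eq_of_lt hc] using key

theorem MvPolynomial.coeff_pow_mul_monomial {σ T : Type*} [DecidableEq σ] [CommRing T]
    [ExpChar T p] (g : MvPolynomial σ T) (c : T) {m m₀ : σ →₀ ℕ} (hm : ∀ i, m i < p ^ l)
    (hm₀ : ∀ i, m₀ i < p ^ l) (ν : σ →₀ ℕ) :
    coeff (p ^ l • ν + m₀) (g ^ p ^ l * monomial m c) =
      if m = m₀ then coeff ν g ^ p ^ l * c else 0 := by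
  have hq : p ^ l ≠ 0 := pow_ne_zero _ (expChar_ne_zero T p)
  rw [coeff_mul_monomial', ← map_iterateFrobenius_expand, coeff_map]
  by_cases hmm : m = m₀
  · subst hmm
    simp [coeff_expand_smul _ hq, iterateFrobenius_def]
  rw [if_neg hmm]
  split_ifs with hle
  · obtain ⟨i, hi⟩ : ∃ i, m i ≠ m₀ i := by
      by_contra! h
      exact hmm (Finsupp.ext h)
    rw [coeff_expand_of_not_dvd _ (i := i), map_zero, zero_mul]
    intro hdvd
    simp only [Finsupp.tsub_apply, Finsupp.add_apply, Finsupp.smul_apply, smul_eq_mul] at hdvd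
    exact hi (Nat.eq_of_dvd_mul_add_sub (hm₀ i) (hm i) (hle i) hdvd)
  · rfl

noncomputable def MvPolynomial.frobeniusMonomial {σ T J : Type*} [CommSemiring T] (p l : ℕ)
    (w : J → T) (jm : J × {m : σ →₀ ℕ // ∀ i, m i < p ^ l}) : MvPolynomial σ T :=
  monomial jm.2.1 (w jm.1)

section FrobeniusMonomial

variable {σ T J : Type*} [CommRing T] [ExpChar T p] {w : J → T}

theorem MvPolynomial.injective_frobeniusCombination_frobeniusMonomial
    (hw : Function.Injective (frobeniusCombination p l w)) :
    Function.Injective (frobeniusCombination p l (frobeniusMonomial (σ := σ) p l w)) := by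
  classical
  have hcoeff (ν : σ →₀ ℕ) (m₀ : {m : σ →₀ ℕ // ∀ i, m i < p ^ l}) :
      (coeffAddMonoidHom (p ^ l • ν + m₀.1)).comp
          (frobeniusCombination p l (frobeniusMonomial p l w)) =
        (frobeniusCombination p l w).comp
          ((Finsupp.mapRange.addMonoidHom (coeffAddMonoidHom ν)).comp
            (Finsupp.comapDomain.addMonoidHom (f := fun j => (j, m₀))
              fun _ _ h => (Prod.ext_iff.1 h).1)) := by
    refine Finsupp.addHom_ext fun ⟨j, m⟩ g => ?_
    by_cases hm : m = m₀
    · subst hm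
      simp [frobeniusMonomial, coeff_pow_mul_monomial g _ m.2 m.2,
        Finsupp.comapDomain.addMonoidHom, Finsupp.comapDomain_single]
    · have hm' : m.1 ≠ m₀.1 := fun h => hm (Subtype.ext h)
      have h0 : Finsupp.comapDomain.addMonoidHom (f := fun j => (j, m₀))
          (fun _ _ h => (Prod.ext_iff.1 h).1) (Finsupp.single (j, m) g) = 0 := by
        ext j'
        simp [Finsupp.comapDomain.addMonoidHom, hm]
      simp [frobeniusMonomial, coeff_pow_mul_monomial g _ m.2 m₀.2, hm', h0]
  refine (injective_iff_map_eq_zero _).2 fun a ha =>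
    Finsupp.ext fun ⟨j, m₀⟩ => MvPolynomial.ext _ _ fun ν => ?_
  have h0 := DFunLike.congr_fun (hcoeff ν m₀) a
  rw [AddMonoidHom.comp_apply, ha, map_zero, AddMonoidHom.comp_apply,
    ← map_zero (frobeniusCombination p l w)] at h0
  simpa [Finsupp.comapDomain.addMonoidHom] using DFunLike.congr_fun (hw h0.symm) j

theorem MvPolynomial.surjective_frobeniusCombination_frobeniusMonomial
    (hw : Function.Surjective (frobeniusCombination p l w)) :
    Function.Surjective (frobeniusCombination p l (frobeniusMonomial (σ := σ) p l w)) := by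
  intro f
  induction f using MvPolynomial.induction_on' with
  | add f g hf hg =>
    obtain ⟨a, rfl⟩ := hf
    obtain ⟨b, rfl⟩ := hg
    exact ⟨a + b, map_add _ _ _⟩
  | monomial μ c =>
    obtain ⟨a, rfl⟩ := hw c
    induction a using Finsupp.induction_linear with
    | zero => exact ⟨0, by simp⟩
    | add a b ha hb =>
      obtain ⟨a', ha'⟩ := ha
      obtain ⟨b', hb'⟩ := hb
      exact ⟨a' + b', by rw [map_add, ha', hb', map_add, map_add]⟩
    | single j t =>
      have hq : 0 < p ^ l := pow_pos (expChar_pos T p) l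
      let μ₀ : {m : σ →₀ ℕ // ∀ i, m i < p ^ l} :=
        ⟨μ.mapRange (· % p ^ l) (Nat.zero_mod _), fun i => Nat.mod_lt _ hq⟩
      let μ₁ : σ →₀ ℕ := μ.mapRange (· / p ^ l) (Nat.zero_div _)
      have hμ : p ^ l • μ₁ + μ₀.1 = μ :=
        Finsupp.ext fun i => Nat.div_add_mod (μ i) (p ^ l)
      refine ⟨Finsupp.single (j, μ₀) (monomial μ₁ t), ?_⟩
      simp [frobeniusMonomial, monomial_pow, monomial_mul, hμ]

end FrobeniusMonomial

theorem HasFrobeniusBasis.mvPolynomial {T : Type u} [CommRing T] [ExpChar T p] (σ : Type*)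
    (hT : HasFrobeniusBasis T p l) : HasFrobeniusBasis (MvPolynomial σ T) p l :=
  let ⟨_, _, hinj, hsurj⟩ := hT
  ⟨_, _, injective_frobeniusCombination_frobeniusMonomial hinj,
    surjective_frobeniusCombination_frobeniusMonomial hsurj⟩

end Polynomial

theorem pow_mem_of_mem_adjoin {R A : Type*} [CommRing R] [CommRing A] [Algebra R A] {p : ℕ}
    [ExpChar A p] (n : ℕ) {s : Set A} {B : Subalgebra R A} (hs : ∀ x ∈ s, x ^ p ^ n ∈ B)
    {f : A} (hf : f ∈ Algebra.adjoin R s) : f ^ p ^ n ∈ B := by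
  induction hf using Algebra.adjoin_induction with
  | mem x hx => exact hs x hx
  | algebraMap r => exact map_pow (algebraMap R A) r _ ▸ B.algebraMap_mem _
  | add x y _ _ hx hy => exact (add_pow_expChar_pow x y p n).symm ▸ add_mem hx hy
  | mul x y _ _ hx hy => exact (mul_pow x y _).symm ▸ mul_mem hx hy

theorem Subalgebra.isPRadical_val {R A : Type*} [CommRing R] [CommRing A] [Algebra R A]
    (S : Subalgebra R A) (p : ℕ) (h : ∀ f : A, ∃ n, f ^ p ^ n ∈ S) :
    IsPRadical (S.val : S →+* A) p where
  pow_mem' f := let ⟨n, hn⟩ := h f; ⟨n, ⟨_, hn⟩, rfl⟩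
  ker_le' x hx := (Subtype.ext hx : x = 0) ▸ zero_mem _

theorem RingEquiv.isPRadical {K L : Type*} [CommRing K] [CommRing L] (e : K ≃+* L) (p : ℕ) :
    IsPRadical e.toRingHom p where
  pow_mem' x := ⟨0, e.symm x, by simp⟩
  ker_le' x hx := (e.injective (hx.trans (map_zero e).symm) : x = 0) ▸ zero_mem _

/-- Let `k` be a field of characteristic `2` and let
`R = k[x⁴, x³y, xy³, y⁴] ⊆ k[x,y]`.  Then `k[x⁴,y⁴] ⊆ R ⊆ k[x,y]` and both inclusions are
purely inseparable; hence `R` has the same perfect closure as `k[x,y]` and is `F`-coherent. -/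
theorem fCoherent_of_semigroup_ring_char_two
    (k : Type*) [Field k] [CharP k 2] :
    let x : MvPolynomial (Fin 2) k := X 0
    let y : MvPolynomial (Fin 2) k := X 1
    let R : Subalgebra k (MvPolynomial (Fin 2) k) :=
      Algebra.adjoin k {x ^ 4, x ^ 3 * y, x * y ^ 3, y ^ 4}
    let A : Subalgebra k (MvPolynomial (Fin 2) k) :=
      Algebra.adjoin k {x ^ 4, y ^ 4}
    A ≤ R ∧
    (∀ f ∈ R, ∃ e : ℕ, f ^ 2 ^ e ∈ A) ∧
    (∀ f : MvPolynomial (Fin 2) k, ∃ e : ℕ, f ^ 2 ^ e ∈ R) ∧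
    Nonempty (PerfectClosure (↥R) 2 ≃+* PerfectClosure (MvPolynomial (Fin 2) k) 2) ∧
    IsCoherentRing (PerfectClosure (↥R) 2) := by
  intro x y R A
  have hAR : A ≤ R := Algebra.adjoin_mono (by simp [Set.insert_subset_iff])
  have hRA (f : MvPolynomial (Fin 2) k) (hf : f ∈ R) : f ^ 2 ^ 2 ∈ A := by
    have hx : x ^ 4 ∈ A := Algebra.subset_adjoin (by simp)
    have hy : y ^ 4 ∈ A := Algebra.subset_adjoin (by simp)
    refine pow_mem_of_mem_adjoin 2 ?_ hf
    simp only [Set.mem_insert_iff, Set.mem_singleton_iff, forall_eq_or_imp, forall_eq]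
    exact ⟨pow_mem hx _,
      (by ring : (x ^ 4) ^ 3 * y ^ 4 = (x ^ 3 * y) ^ 2 ^ 2) ▸ mul_mem (pow_mem hx 3) hy,
      (by ring : x ^ 4 * (y ^ 4) ^ 3 = (x * y ^ 3) ^ 2 ^ 2) ▸ mul_mem hx (pow_mem hy 3),
      pow_mem hy _⟩
  have hR (f : MvPolynomial (Fin 2) k) : f ^ 2 ^ 2 ∈ R := by
    refine pow_mem_of_mem_adjoin 2 ?_ (adjoin_range_X (R := k) ▸ Algebra.mem_top : f ∈ _)
    rintro _ ⟨i, rfl⟩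
    fin_cases i <;> exact Algebra.subset_adjoin (by simp [x, y])
  have := R.isPRadical_val 2 fun f => ⟨2, hR f⟩
  have := IsPRadical.trans (R.val : R →+* _) (PerfectClosure.of (MvPolynomial (Fin 2) k) 2) 2
  let e := IsPerfectClosure.equiv (PerfectClosure.of R 2)
    ((PerfectClosure.of (MvPolynomial (Fin 2) k) 2).comp (R.val : R →+* _)) 2
  have := e.symm.isPRadical 2
  have := IsPRadical.trans (PerfectClosure.of (MvPolynomial (Fin 2) k) 2) e.symm.toRingHom 2
  exact ⟨hAR, fun f hf => ⟨2, hRA f hf⟩, fun f => ⟨2, hR f⟩, ⟨e⟩,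
    isCoherentRing_of_isPRadical (e.symm.toRingHom.comp (PerfectClosure.of _ 2))
      fun _ => (hasFrobeniusBasis_of_field (p := 2) k).mvPolynomial _⟩
end

section
/- Let k be a field of characteristic p > 2 and let R = k[x^4, x^2 y, x y^2, y^4] ⊆ k[x,y]. Then x^2 lies in the integral closure of R in its fraction field but no power of the Frobenius of x^2 lies in R, i.e., (x^2)^{p^k} ∉ R for all k ≥ 0; in particular the normalization of R is not purely inseparable over R. -/
open MvPolynomial

/-!
`x²` is integral over `R` because its square `x⁴` lies in `R`. The substitution `x ↦ t, y ↦ 0`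
maps `R` into `k[t⁴]`, the image of `expand 4`, since every other generator involves `y`.
It sends `(x²)^(pⁿ)` to `t^(2pⁿ)`, which is not in `k[t⁴]` because `2pⁿ ≡ 2 mod 4` for odd `p`.
-/

theorem Subalgebra.isIntegral_of_pow_mem {R A : Type*} [CommRing R] [CommRing A] [Algebra R A]
    (S : Subalgebra R A) {a : A} {n : ℕ} (hn : 0 < n) (h : a ^ n ∈ S) : IsIntegral S a :=
  IsIntegral.of_pow hn (isIntegral_algebraMap (x := (⟨a ^ n, h⟩ : S)))

theorem Polynomial.dvd_of_X_pow_mem_range_expand {R : Type*} [CommSemiring R] [Nontrivial R]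
    {p n : ℕ} (hp : 0 < p) (h : (Polynomial.X ^ n : Polynomial R) ∈ (expand R p).range) : p ∣ n := by
  obtain ⟨f, hf⟩ := h
  by_contra hpn
  have hcoeff := congrArg (coeff · n) hf
  simp [coeff_expand hp, hpn] at hcoeff

theorem adjoin_le_comap_range_expand (k : Type*) [CommSemiring k] :
    Algebra.adjoin k {X 0 ^ 4, X 0 ^ 2 * X 1, X 0 * X 1 ^ 2, X 1 ^ 4} ≤
      (Polynomial.expand k 4).range.comap
        (aeval ![Polynomial.X, 0] : MvPolynomial (Fin 2) k →ₐ[k] Polynomial k) := by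
  rw [Algebra.adjoin_le_iff]
  rintro f (rfl | rfl | rfl | rfl)
  · exact ⟨Polynomial.X, by simp⟩
  all_goals exact ⟨0, by simp⟩

theorem not_purelyInseparable_normalization_char_odd_general
    (k : Type*) [Field k] (p : ℕ) [Fact p.Prime] (hp : 2 < p) :
    let x : MvPolynomial (Fin 2) k := X 0
    let y : MvPolynomial (Fin 2) k := X 1
    let R : Subalgebra k (MvPolynomial (Fin 2) k) :=
      Algebra.adjoin k {x ^ 4, x ^ 2 * y, x * y ^ 2, y ^ 4}
    IsIntegral (↥R) (x ^ 2) ∧ ∀ n : ℕ, (x ^ 2) ^ p ^ n ∉ R := by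
  intro x y R
  refine ⟨R.isIntegral_of_pow_mem two_pos ?_, fun n hmem => ?_⟩
  · rw [← pow_mul]
    exact Algebra.subset_adjoin (by simp)
  · have hexpand := adjoin_le_comap_range_expand k hmem
    have h4 : 4 ∣ 2 * p ^ n :=
      Polynomial.dvd_of_X_pow_mem_range_expand (R := k) four_pos
        (by simpa [x, ← pow_mul] using hexpand)
    obtain ⟨m, hm⟩ := ((Fact.out : p.Prime).odd_of_ne_two hp.ne').pow (n := n)
    omega

/-- Let `k` be a field of characteristic `p > 2` and let
`R = k[x⁴, x²y, xy², y⁴] ⊆ k[x,y]`.  Then `x²` is integral over `R` (it lies in the integral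
closure of `R` in its fraction field), but `(x²)^(p^k) ∉ R` for all `k ≥ 0`; in particular the
normalization of `R` is not purely inseparable over `R`. -/
theorem not_purelyInseparable_normalization_char_odd
    (k : Type*) [Field k] (p : ℕ) [Fact p.Prime] [CharP k p] (hp : 2 < p) :
    let x : MvPolynomial (Fin 2) k := X 0
    let y : MvPolynomial (Fin 2) k := X 1
    let R : Subalgebra k (MvPolynomial (Fin 2) k) :=
      Algebra.adjoin k {x ^ 4, x ^ 2 * y, x * y ^ 2, y ^ 4}
    IsIntegral (↥R) (x ^ 2) ∧ ∀ n : ℕ, (x ^ 2) ^ p ^ n ∉ R :=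
  not_purelyInseparable_normalization_char_odd_general k p hp
end

section
/- Let R be a coherent commutative ring and S a coherent R-algebra such that R is an algebra retract of S. If S is coherent, then R is coherent. Consequently, if R ⊆ S are reduced Noetherian rings of characteristic p > 0, R is an algebra retract of S, and S is F-coherent, then R is F-coherent. -/
theorem Module.finitePresentation_span_range_iff {R M ι : Type*} [CommRing R] [AddCommGroup M]
    [Module R M] [Fintype ι] (v : ι → M) :
    Module.FinitePresentation R (Submodule.span R (Set.range v)) ↔
      (LinearMap.ker (Fintype.linearCombination R v)).FG := by
  have hmem (x : ι → R) : Fintype.linearCombination R v x ∈ Submodule.span R (Set.range v) := by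
    rw [← Fintype.range_linearCombination]
    exact LinearMap.mem_range_self _ x
  have hsurj : Function.Surjective ((Fintype.linearCombination R v).codRestrict _ hmem) := by
    rw [← LinearMap.range_eq_top, LinearMap.range_codRestrict, Fintype.range_linearCombination,
      Submodule.comap_subtype_self]
  rw [← Module.FinitePresentation.fg_ker_iff _ hsurj, LinearMap.ker_codRestrict]

def RingHom.compLeftSemilinearMap {R S : Type*} [Semiring R] [Semiring S] (g : S →+* R)
    (ι : Type*) : (ι → S) →ₛₗ[g] (ι → R) where
  toFun y := g ∘ y
  map_add' _ _ := by ext; simp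
  map_smul' _ _ := by ext; simp

section Retract

variable {R S : Type*} [CommRing R] [CommRing S]

theorem RingHom.map_fintypeLinearCombination {ι : Type*} [Fintype ι] (h : R →+* S)
    (v x : ι → R) :
    h (Fintype.linearCombination R v x) = Fintype.linearCombination S (h ∘ v) (h ∘ x) := by
  simp [Fintype.linearCombination_apply]

theorem ker_fintypeLinearCombination_eq_map_of_comp_eq_id {ι : Type*} [Fintype ι]
    {f : R →+* S} {g : S →+* R} [RingHomSurjective g]
    (hgf : g.comp f = RingHom.id R) (v : ι → R) :
    LinearMap.ker (Fintype.linearCombination R v) =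
      (LinearMap.ker (Fintype.linearCombination S (f ∘ v))).map (g.compLeftSemilinearMap ι) := by
  have hgf' (r : R) : g (f r) = r := RingHom.congr_fun hgf r
  ext x
  simp only [LinearMap.mem_ker, Submodule.mem_map]
  constructor
  · intro hx
    refine ⟨f ∘ x, ?_, funext fun i => hgf' (x i)⟩
    rw [← RingHom.map_fintypeLinearCombination, hx, map_zero]
  · rintro ⟨y, hy, rfl⟩
    show Fintype.linearCombination R v (g ∘ y) = 0
    have hv : g ∘ f ∘ v = v := funext fun i => hgf' (v i)
    rw [← hv, ← RingHom.map_fintypeLinearCombination, hy, map_zero]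

theorem IsCoherentRing.of_retract (f : R →+* S) (g : S →+* R) (hgf : g.comp f = RingHom.id R)
    (hS : IsCoherentRing S) : IsCoherentRing R := by
  have : RingHomSurjective g := ⟨fun r => ⟨f r, RingHom.congr_fun hgf r⟩⟩
  intro I hI
  obtain ⟨n, v, rfl⟩ := Submodule.fg_iff_exists_fin_generating_family.mp hI
  rw [Module.finitePresentation_span_range_iff,
    ker_fintypeLinearCombination_eq_map_of_comp_eq_id hgf]
  refine Submodule.FG.map _ ?_
  rw [← Module.finitePresentation_span_range_iff]
  exact hS _ (Submodule.fg_span (Set.finite_range _))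

end Retract

theorem PerfectClosure.exists_comp_eq_id {R S : Type*} [CommRing R] [CommRing S] (p : ℕ)
    [Fact p.Prime] [CharP R p] [CharP S p] {f : R →+* S} {g : S →+* R}
    (hgf : g.comp f = RingHom.id R) :
    ∃ (f' : PerfectClosure R p →+* PerfectClosure S p)
      (g' : PerfectClosure S p →+* PerfectClosure R p), g'.comp f' = RingHom.id _ := by
  let f' := PerfectRing.lift (of R p) ((of S p).comp f) p
  let g' := PerfectRing.lift (of S p) ((of R p).comp g) p
  refine ⟨f', g', IsPRadical.injective_comp_of_perfect _ (of R p) p ?_⟩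
  show (g'.comp f').comp (of R p) = (RingHom.id _).comp (of R p)
  rw [RingHom.comp_assoc, PerfectRing.lift_comp, ← RingHom.comp_assoc, PerfectRing.lift_comp,
    RingHom.comp_assoc, hgf, RingHom.comp_id, RingHom.id_comp]

/-- An algebra retract of a coherent ring is coherent; consequently, if
`R ⊆ S` are reduced Noetherian rings of characteristic `p > 0`, `R` is an algebra retract of
`S`, and `S` is `F`-coherent, then `R` is `F`-coherent. -/
theorem isCoherentRing_of_retract_and_fCoherent :
    (∀ (R S : Type) (_ : CommRing R) (_ : CommRing S)
      (ι : R →+* S) (_ : Function.Injective ι)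
      (φ : S →+* R) (_ : φ.comp ι = RingHom.id R),
      IsCoherentRing S → IsCoherentRing R) ∧
    (∀ (R S : Type) (_ : CommRing R) (_ : CommRing S),
      IsReduced R → IsReduced S → IsNoetherianRing R → IsNoetherianRing S →
      ∀ (p : ℕ) (_ : Fact p.Prime) (_ : CharP R p) (_ : CharP S p)
        (ι : R →+* S) (_ : Function.Injective ι)
        (φ : S →+* R) (_ : φ.comp ι = RingHom.id R),
        IsCoherentRing (PerfectClosure S p) → IsCoherentRing (PerfectClosure R p)) := by
  refine ⟨fun R S _ _ f _ g hgf hS => IsCoherentRing.of_retract f g hgf hS, ?_⟩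
  intro R S _ _ _ _ _ _ p _ _ _ f _ g hgf hS
  obtain ⟨f', g', hgf'⟩ := PerfectClosure.exists_comp_eq_id p hgf
  exact IsCoherentRing.of_retract f' g' hgf' hS
end
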